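/- Assume [0,1] ⊆ I ⊆ ℝ₊ and let f : Iⁿ → ℝ be a nonconstant function with f(0) = 0. The following are equivalent: (i) f is a signed quasi-Choquet integral and there exists S ⊆ X with f(1_S) ≠ 0; (ii) f is comonotonically modular (equivalently, invariant under horizontal min-differences) and there exists a nondecreasing function φ : I → ℝ with φ(0) = 0 such that f(x·1_S) = sign(x)·φ(x)·f(sign(x)·1_S) for every x ∈ I and every S ⊆ X. -/

import Mathlib

/-- `S↑_σ(i)` (0-indexed): the set `{σ(i), σ(i+1), …, σ(n-1)}`.  For `i = n` it is empty. -/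
def SUp {n : ℕ} (σ : Equiv.Perm (Fin n)) (i : ℕ) : Finset (Fin n) :=
  (Finset.univ.filter (fun j : Fin n => i ≤ (j : ℕ))).image σ

/-- `S↓_σ(i)`: the set `{σ(0), …, σ(i-1)}`.  For `i = 0` it is empty. -/
def SDown {n : ℕ} (σ : Equiv.Perm (Fin n)) (i : ℕ) : Finset (Fin n) :=
  (Finset.univ.filter (fun j : Fin n => (j : ℕ) < i)).image σ

/-- Two tuples are comonotonic if some permutation sorts both nondecreasingly. -/
def Comonotone {n : ℕ} (x y : Fin n → ℝ) : Prop :=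
  ∃ σ : Equiv.Perm (Fin n), Monotone (x ∘ σ) ∧ Monotone (y ∘ σ)

/-- The tuple `r·1_S`. -/
def indTuple {n : ℕ} (S : Finset (Fin n)) (r : ℝ) : Fin n → ℝ :=
  fun j => if j ∈ S then r else 0

/-- The signed Choquet integral of `x` w.r.t. `v`, computed via a sorting permutation. -/
noncomputable def Cv {n : ℕ} (v : Finset (Fin n) → ℝ) (x : Fin n → ℝ) : ℝ :=
  ∑ i : Fin n,
    x (Tuple.sort x i) *
      (v (SUp (Tuple.sort x) (i : ℕ)) - v (SUp (Tuple.sort x) ((i : ℕ) + 1)))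

/-- `f` is the restriction to `Iⁿ` of a signed Choquet integral. -/
def IsSignedChoquetOn {n : ℕ} (I : Set ℝ) (f : (Fin n → ℝ) → ℝ) : Prop :=
  ∃ v : Finset (Fin n) → ℝ, v ∅ = 0 ∧
    ∀ σ : Equiv.Perm (Fin n), ∀ x : Fin n → ℝ, (∀ i, x i ∈ I) → Monotone (x ∘ σ) →
      f x = ∑ i : Fin n, x (σ i) * (v (SUp σ (i : ℕ)) - v (SUp σ ((i : ℕ) + 1)))

/-- `f` is the restriction to `Iⁿ` of a symmetric signed Choquet integral
`Č_v(x) = C_v(x⁺) - C_v(x⁻)`. -/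
def IsSymSignedChoquetOn {n : ℕ} (I : Set ℝ) (f : (Fin n → ℝ) → ℝ) : Prop :=
  ∃ v : Finset (Fin n) → ℝ, v ∅ = 0 ∧
    ∀ x : Fin n → ℝ, (∀ i, x i ∈ I) →
      f x = Cv v (fun i => max (x i) 0) - Cv v (fun i => max (-x i) 0)

/-- Comonotonic modularity (on tuples with entries in `D`). -/
def ComonModularOn {n : ℕ} (D : Set ℝ) (f : (Fin n → ℝ) → ℝ) : Prop :=
  ∀ x y : Fin n → ℝ, (∀ i, x i ∈ D) → (∀ i, y i ∈ D) → Comonotone x y →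
    f x + f y = f (fun i => min (x i) (y i)) + f (fun i => max (x i) (y i))

/-- Comonotonic additivity (on tuples with entries in `D`). -/
def ComonAdditiveOn {n : ℕ} (D : Set ℝ) (f : (Fin n → ℝ) → ℝ) : Prop :=
  ∀ x y : Fin n → ℝ, (∀ i, x i ∈ D) → (∀ i, y i ∈ D) → Comonotone x y →
    (∀ i, x i + y i ∈ D) → f (fun i => x i + y i) = f x + f y

/-- Comonotonic maxitivity. -/
def ComonMaxitiveOn {n : ℕ} (D : Set ℝ) (f : (Fin n → ℝ) → ℝ) : Prop :=
  ∀ x y : Fin n → ℝ, (∀ i, x i ∈ D) → (∀ i, y i ∈ D) → Comonotone x y →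
    f (fun i => max (x i) (y i)) = max (f x) (f y)

/-- Comonotonic minitivity. -/
def ComonMinitiveOn {n : ℕ} (D : Set ℝ) (f : (Fin n → ℝ) → ℝ) : Prop :=
  ∀ x y : Fin n → ℝ, (∀ i, x i ∈ D) → (∀ i, y i ∈ D) → Comonotone x y →
    f (fun i => min (x i) (y i)) = min (f x) (f y)

/-- Horizontal min-additivity. -/
def HorizMinAdditiveOn {n : ℕ} (D : Set ℝ) (f : (Fin n → ℝ) → ℝ) : Prop :=
  ∀ x : Fin n → ℝ, (∀ i, x i ∈ D) → ∀ c ∈ D, (∀ i, x i - min (x i) c ∈ D) →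
    f x = f (fun i => min (x i) c) + f (fun i => x i - min (x i) c)

/-- Horizontal max-additivity. -/
def HorizMaxAdditiveOn {n : ℕ} (D : Set ℝ) (f : (Fin n → ℝ) → ℝ) : Prop :=
  ∀ x : Fin n → ℝ, (∀ i, x i ∈ D) → ∀ c ∈ D, (∀ i, x i - max (x i) c ∈ D) →
    f x = f (fun i => max (x i) c) + f (fun i => x i - max (x i) c)

/-- Horizontal median-additivity (for `I` centered at `0`). -/
def HorizMedAdditiveOn {n : ℕ} (I : Set ℝ) (f : (Fin n → ℝ) → ℝ) : Prop :=
  ∀ x : Fin n → ℝ, (∀ i, x i ∈ I) → ∀ c ∈ I, 0 ≤ c →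
    f x = f (fun i => max (-c) (min (x i) c)) + f (fun i => x i - min (x i) c)
        + f (fun i => x i - max (x i) (-c))

/-- Invariance under horizontal min-differences (for domains of nonnegative tuples). -/
def InvHMinDiffOn {n : ℕ} (D : Set ℝ) (f : (Fin n → ℝ) → ℝ) : Prop :=
  ∀ x : Fin n → ℝ, (∀ i, x i ∈ D) → ∀ c ∈ D,
    f x - f (fun i => min (x i) c) =
      f (fun i => if x i ≤ c then 0 else x i) -
        f (fun i => min (if x i ≤ c then 0 else x i) c)

/-- Invariance under horizontal max-differences (for domains of nonpositive tuples). -/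
def InvHMaxDiffOn {n : ℕ} (D : Set ℝ) (f : (Fin n → ℝ) → ℝ) : Prop :=
  ∀ x : Fin n → ℝ, (∀ i, x i ∈ D) → ∀ c ∈ D,
    f x - f (fun i => max (x i) c) =
      f (fun i => if c ≤ x i then 0 else x i) -
        f (fun i => max (if c ≤ x i then 0 else x i) c)

/-- `⋀_{i ∈ S} x i`, with the convention that the empty infimum is `b`. -/
noncomputable def infWith {n : ℕ} (b : ℝ) (S : Finset (Fin n)) (x : Fin n → ℝ) : ℝ :=
  if h : S.Nonempty then S.inf' h x else b

/-- An `[a,b]`-valued capacity. -/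
def IsCapacityOn {n : ℕ} (a b : ℝ) (μ : Finset (Fin n) → ℝ) : Prop :=
  μ ∅ = a ∧ μ Finset.univ = b ∧ ∀ S T : Finset (Fin n), S ⊆ T → μ S ≤ μ T

/-- `f` is nondecreasing (in each argument) on tuples with entries in `D`. -/
def NondecreasingOn {n : ℕ} (D : Set ℝ) (f : (Fin n → ℝ) → ℝ) : Prop :=
  ∀ x y : Fin n → ℝ, (∀ i, x i ∈ D) → (∀ i, y i ∈ D) → (∀ i, x i ≤ y i) → f x ≤ f y

/-!
For a fixed permutation `σ` the Choquet sum `∑ᵢ u_{σ(i)} (v(S↑_σ(i)) - v(S↑_σ(i+1)))` is linear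
in `u`, and it is the same for all permutations sorting `u`: by Abel summation it only involves
the sets `S↑_σ(i)` at which the sorted values strictly increase, and those are level sets of `u`.
Hence `C_v ∘ φ` is comonotonically modular, and `f(a·1_S) = φ(a)·v(S)`.

Conversely, set `v(S) = f(1_S)`, sort `x` by `σ`, and let `x⁽ᵏ⁾` be `x` with the entries outside
`S↑_σ(k)` replaced by `0`. Comonotonic modularity applied to `x⁽ᵏ⁺¹⁾` and `x_{σ(k)}·1_{S↑_σ(k)}`,
or invariance under horizontal min-differences at the level `c = x_{σ(k)}`, gives
`f(x⁽ᵏ⁾) - f(x⁽ᵏ⁺¹⁾) = φ(x_{σ(k)}) (v(S↑_σ(k)) - v(S↑_σ(k+1)))`, and these steps telescope to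
`f(x) = C_v(φ ∘ x)`.
-/

open Finset

section Choquet

variable {n : ℕ}

theorem Fin.sum_sub_succ {M : Type*} [AddCommGroup M] (F : ℕ → M) :
    ∑ i : Fin n, (F i - F (i + 1)) = F 0 - F n := by
  rw [Fin.sum_univ_eq_sum_range (fun i => F i - F (i + 1)), sum_range_sub']

theorem Fin.sum_mul_sub_succ_eq_zero {R : Type*} [CommRing R] {a : Fin n → R} {H : ℕ → R}
    (h0 : H 0 = 0) (hn : H n = 0)
    (hH : ∀ i j : Fin n, (j : ℕ) = i + 1 → a i ≠ a j → H j = 0) :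
    ∑ i : Fin n, a i * (H i - H (i + 1)) = 0 := by
  set b : ℕ → R := fun i => if h : i < n then a ⟨i, h⟩ else 0
  -- Abel summation: the partial sums are `-b m * H m`, since `H` vanishes where `b` jumps.
  have partial_sum : ∀ m ≤ n, ∑ i ∈ range m, b i * (H i - H (i + 1)) = -b m * H m := by
    intro m
    induction m with
    | zero => simp [h0]
    | succ m ih =>
      intro hm
      rw [sum_range_succ, ih (by omega)]
      rcases (by omega : m + 1 < n ∨ m + 1 = n) with h | rfl
      · by_cases hb : b m = b (m + 1)
        · rw [hb]; ring
        · have hbm : b m = a ⟨m, by omega⟩ := dif_pos _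
          have hbm1 : b (m + 1) = a ⟨m + 1, h⟩ := dif_pos h
          rw [hH ⟨m, by omega⟩ ⟨m + 1, h⟩ rfl (by rwa [← hbm, ← hbm1])]
          ring
      · rw [hn]; ring
  calc ∑ i : Fin n, a i * (H i - H (i + 1))
      = ∑ i : Fin n, b i * (H i - H (i + 1)) := sum_congr rfl fun i _ => by simp [b]
    _ = 0 := by
      rw [Fin.sum_univ_eq_sum_range (fun i => b i * (H i - H (i + 1))), partial_sum n le_rfl, hn,
        mul_zero]

theorem mem_SUp {σ : Equiv.Perm (Fin n)} {i : ℕ} {j : Fin n} :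
    j ∈ SUp σ i ↔ i ≤ (σ.symm j : ℕ) := by
  simp only [SUp, mem_image, mem_filter, mem_univ, true_and]
  exact ⟨by rintro ⟨k, hk, rfl⟩; simpa using hk, fun h => ⟨σ.symm j, h, σ.apply_symm_apply j⟩⟩

theorem SUp_zero (σ : Equiv.Perm (Fin n)) : SUp σ 0 = univ := by
  ext j; simp [mem_SUp]

theorem SUp_of_le (σ : Equiv.Perm (Fin n)) {i : ℕ} (h : n ≤ i) : SUp σ i = ∅ := by
  ext j
  simp only [mem_SUp, notMem_empty, iff_false, not_le]
  exact (σ.symm j).isLt.trans_le h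

theorem SUp_eq_insert (σ : Equiv.Perm (Fin n)) (i : Fin n) :
    SUp σ i = insert (σ i) (SUp σ ((i : ℕ) + 1)) := by
  ext j
  simp only [mem_insert, mem_SUp, ← Equiv.symm_apply_eq, Fin.ext_iff]
  omega

theorem SUp_eq_filter_of_lt {u : Fin n → ℝ} {σ : Equiv.Perm (Fin n)} (hσ : Monotone (u ∘ σ))
    {i j : Fin n} (hij : (j : ℕ) = i + 1) (hlt : u (σ i) < u (σ j)) :
    SUp σ j = univ.filter (fun l => u (σ j) ≤ u l) := by
  ext l
  simp only [mem_SUp, mem_filter, mem_univ, true_and]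
  constructor
  · intro h
    simpa using hσ (show j ≤ σ.symm l from h)
  · intro h
    by_contra hl
    have : u l ≤ u (σ i) := by
      simpa using hσ (show σ.symm l ≤ i from Fin.le_def.2 (by omega))
    linarith

noncomputable def choquetSum (v : Finset (Fin n) → ℝ) (σ : Equiv.Perm (Fin n))
    (u : Fin n → ℝ) : ℝ :=
  ∑ i : Fin n, u (σ i) * (v (SUp σ (i : ℕ)) - v (SUp σ ((i : ℕ) + 1)))

theorem choquetSum_eq_of_monotone (v : Finset (Fin n) → ℝ) {u : Fin n → ℝ}
    {σ τ : Equiv.Perm (Fin n)} (hσ : Monotone (u ∘ σ)) (hτ : Monotone (u ∘ τ)) :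
    choquetSum v σ u = choquetSum v τ u := by
  have hστ : u ∘ σ = u ∘ τ :=
    (Tuple.comp_sort_eq_comp_iff_monotone.2 hσ).trans
      (Tuple.comp_sort_eq_comp_iff_monotone.2 hτ).symm
  have hστ' (i : Fin n) : u (τ i) = u (σ i) := (congrFun hστ i).symm
  rw [← sub_eq_zero]
  set H : ℕ → ℝ := fun k => v (SUp σ k) - v (SUp τ k)
  calc choquetSum v σ u - choquetSum v τ u
      = ∑ i : Fin n, u (σ i) * (H i - H (i + 1)) := by
        simp only [choquetSum, hστ', ← sum_sub_distrib, H]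
        exact sum_congr rfl fun i _ => by ring
    _ = 0 := by
      refine Fin.sum_mul_sub_succ_eq_zero (by simp [H, SUp_zero]) (by simp [H, SUp_of_le])
        fun i j hij hne => ?_
      -- at a strict increase of the sorted values, both upper sets are level sets of `u`
      have hlt : u (σ i) < u (σ j) :=
        (hσ (show i ≤ j from Fin.le_def.2 (by omega))).lt_of_ne hne
      have hlt' : u (τ i) < u (τ j) := by rwa [hστ', hστ']
      simp only [H, SUp_eq_filter_of_lt hσ hij hlt, SUp_eq_filter_of_lt hτ hij hlt', hστ',
        sub_self]

theorem Cv_eq_choquetSum (v : Finset (Fin n) → ℝ) {u : Fin n → ℝ} {σ : Equiv.Perm (Fin n)}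
    (hσ : Monotone (u ∘ σ)) : Cv v u = choquetSum v σ u :=
  choquetSum_eq_of_monotone v (Tuple.monotone_sort u) hσ

theorem choquetSum_add (v : Finset (Fin n) → ℝ) (σ : Equiv.Perm (Fin n)) (u w : Fin n → ℝ) :
    choquetSum v σ (u + w) = choquetSum v σ u + choquetSum v σ w := by
  simp only [choquetSum, Pi.add_apply, add_mul, sum_add_distrib]

theorem choquetSum_indTuple {v : Finset (Fin n) → ℝ} (hv : v ∅ = 0) {σ : Equiv.Perm (Fin n)}
    {S : Finset (Fin n)} {c : ℝ} (hc : 0 < c) (hσ : Monotone (indTuple S c ∘ σ)) :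
    choquetSum v σ (indTuple S c) = c * v S := by
  -- each term is `c` times an increment of `k ↦ v (S↑_σ(k) ∩ S)`, which then telescopes
  have hterm (i : Fin n) :
      indTuple S c (σ i) * (v (SUp σ i) - v (SUp σ (i + 1))) =
        c * (v (SUp σ i ∩ S) - v (SUp σ (i + 1) ∩ S)) := by
    by_cases hi : σ i ∈ S
    · have hsub : SUp σ i ⊆ S := by
        intro j hj
        by_contra hjS
        have := hσ (show i ≤ σ.symm j from mem_SUp.1 hj)
        simp [indTuple, hi, hjS] at this
        linarith
      have hsub' : SUp σ (i + 1) ⊆ S := (SUp_eq_insert σ i ▸ hsub).trans' (subset_insert _ _)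
      rw [inter_eq_left.2 hsub, inter_eq_left.2 hsub']
      simp [indTuple, hi]
    · rw [SUp_eq_insert σ i, insert_inter_of_notMem hi]
      simp [indTuple, hi]
  rw [choquetSum, sum_congr rfl fun i _ => hterm i, ← mul_sum,
    Fin.sum_sub_succ (fun k => v (SUp σ k ∩ S))]
  simp [SUp_zero, SUp_of_le, hv]

theorem Cv_indTuple {v : Finset (Fin n) → ℝ} (hv : v ∅ = 0) (S : Finset (Fin n)) {c : ℝ}
    (hc : 0 ≤ c) : Cv v (indTuple S c) = c * v S := by
  rcases hc.eq_or_lt with rfl | hc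
  · simp [Cv, indTuple]
  · exact choquetSum_indTuple hv hc (Tuple.monotone_sort _)

end Choquet

section Representation

variable {n : ℕ} {I : Set ℝ} {f : (Fin n → ℝ) → ℝ} {v : Finset (Fin n) → ℝ} {φ : ℝ → ℝ}

theorem indTuple_zero_right (S : Finset (Fin n)) : indTuple S 0 = fun _ => 0 := by
  ext j; simp [indTuple]

theorem indTuple_empty (r : ℝ) : indTuple (∅ : Finset (Fin n)) r = fun _ => 0 := by
  ext j; simp [indTuple]

theorem indTuple_mem {S : Finset (Fin n)} {a : ℝ} (h0I : (0 : ℝ) ∈ I) (ha : a ∈ I) (j : Fin n) :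
    indTuple S a j ∈ I := by
  unfold indTuple; split_ifs <;> assumption

theorem comp_indTuple (hφ0 : φ 0 = 0) (S : Finset (Fin n)) (a : ℝ) :
    (fun j => φ (indTuple S a j)) = indTuple S (φ a) := by
  ext j; unfold indTuple; split_ifs <;> simp [hφ0]

theorem Cv_comp_eq_choquetSum (v : Finset (Fin n) → ℝ) (hφ : MonotoneOn φ I) {x : Fin n → ℝ}
    (hx : ∀ i, x i ∈ I) {σ : Equiv.Perm (Fin n)} (hσ : Monotone (x ∘ σ)) :
    Cv v (fun i => φ (x i)) = choquetSum v σ (fun i => φ (x i)) :=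
  Cv_eq_choquetSum v fun _ _ hab => hφ (hx _) (hx _) (hσ hab)

theorem apply_indTuple_of_eq_Cv (hv : v ∅ = 0) (hφ : MonotoneOn φ I) (hφ0 : φ 0 = 0)
    (h0I : (0 : ℝ) ∈ I) (hIpos : I ⊆ Set.Ici 0)
    (hrep : ∀ x : Fin n → ℝ, (∀ i, x i ∈ I) → f x = Cv v (fun i => φ (x i)))
    {a : ℝ} (ha : a ∈ I) (S : Finset (Fin n)) : f (indTuple S a) = φ a * v S := by
  have hφa : 0 ≤ φ a := hφ0 ▸ hφ h0I ha (hIpos ha)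
  rw [hrep _ (indTuple_mem h0I ha), comp_indTuple hφ0, Cv_indTuple hv S hφa]

theorem comonModularOn_of_eq_Cv (hφ : MonotoneOn φ I)
    (hrep : ∀ x : Fin n → ℝ, (∀ i, x i ∈ I) → f x = Cv v (fun i => φ (x i))) :
    ComonModularOn I f := by
  rintro x y hx hy ⟨σ, hxσ, hyσ⟩
  have hmin (i : Fin n) : min (x i) (y i) ∈ I := by
    rcases min_choice (x i) (y i) with h | h <;> rw [h] <;> simp [hx, hy]
  have hmax (i : Fin n) : max (x i) (y i) ∈ I := by
    rcases max_choice (x i) (y i) with h | h <;> rw [h] <;> simp [hx, hy]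
  rw [hrep x hx, hrep y hy, hrep _ hmin, hrep _ hmax, Cv_comp_eq_choquetSum v hφ hx hxσ,
    Cv_comp_eq_choquetSum v hφ hy hyσ,
    Cv_comp_eq_choquetSum v hφ hmin fun _ _ h => min_le_min (hxσ h) (hyσ h),
    Cv_comp_eq_choquetSum v hφ hmax fun _ _ h => max_le_max (hxσ h) (hyσ h),
    ← choquetSum_add, ← choquetSum_add]
  congr 1
  ext i
  rcases le_total (x i) (y i) with h | h
  · simp [min_eq_left h, max_eq_right h]
  · simp [min_eq_right h, max_eq_left h, add_comm]

theorem apply_indTuple_sign_iff (hf0 : f (fun _ => 0) = 0) (hφ0 : φ 0 = 0) {a : ℝ} (ha : 0 ≤ a)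
    (S : Finset (Fin n)) :
    f (indTuple S a) = Real.sign a * φ a * f (indTuple S (Real.sign a)) ↔
      f (indTuple S a) = φ a * f (indTuple S 1) := by
  rcases ha.eq_or_lt with rfl | ha
  · simp [indTuple_zero_right, hf0, hφ0]
  · simp [Real.sign_of_pos ha]

end Representation

section Peeling

open Set (indicator)

variable {n : ℕ} {I : Set ℝ} {f : (Fin n → ℝ) → ℝ} {x : Fin n → ℝ} {σ : Equiv.Perm (Fin n)}

theorem le_of_mem_SUp (hσ : Monotone (x ∘ σ)) {i : Fin n} {j : Fin n} (hj : j ∈ SUp σ i) :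
    x (σ i) ≤ x j := by
  simpa using hσ (show i ≤ σ.symm j from mem_SUp.1 hj)

theorem mem_SUp_of_lt (hσ : Monotone (x ∘ σ)) {i : Fin n} {j : Fin n} (hj : x (σ i) < x j) :
    j ∈ SUp σ i := by
  refine mem_SUp.2 (le_of_not_gt fun h => hj.not_ge ?_)
  simpa using hσ (show σ.symm j ≤ i from h.le)

theorem indicator_mem (h0I : (0 : ℝ) ∈ I) (hx : ∀ i, x i ∈ I) (T : Set (Fin n)) (j : Fin n) :
    T.indicator x j ∈ I := by
  by_cases hj : j ∈ T <;> simp [hj, h0I, hx]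

theorem ComonModularOn.indicator_SUp_sub_succ (hmod : ComonModularOn I f) (h0I : (0 : ℝ) ∈ I)
    (hIpos : I ⊆ Set.Ici 0) (hx : ∀ i, x i ∈ I) (hσ : Monotone (x ∘ σ)) (k : Fin n) :
    f (indicator (SUp σ k) x) - f (indicator (SUp σ (k + 1)) x) =
      f (indTuple (SUp σ k) (x (σ k))) - f (indTuple (SUp σ (k + 1)) (x (σ k))) := by
  set a := x (σ k)
  have hx0 (j : Fin n) : 0 ≤ x j := hIpos (hx j)
  have hcomon : Comonotone (indicator (SUp σ (k + 1)) x) (indTuple (SUp σ k) a) := by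
    refine ⟨σ, fun i j hij => ?_, fun i j hij => ?_⟩
    · simp only [Function.comp_apply, Set.indicator_apply, Finset.mem_coe, mem_SUp,
        Equiv.symm_apply_apply]
      split_ifs <;> first | exact hσ hij | exact hx0 _ | exact le_rfl | omega
    · simp only [Function.comp_apply, indTuple, mem_SUp, Equiv.symm_apply_apply]
      split_ifs <;> first | exact le_rfl | exact hx0 _ | omega
  have key := hmod _ _ (indicator_mem h0I hx _) (indTuple_mem h0I (hx _)) hcomon
  have hmin : (fun j => min (indicator (SUp σ (k + 1)) x j) (indTuple (SUp σ k) a j)) =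
      indTuple (SUp σ (k + 1)) a := by
    ext j
    by_cases hj : j ∈ SUp σ (k + 1)
    · have hjk : j ∈ SUp σ k := SUp_eq_insert σ k ▸ mem_insert_of_mem hj
      simp [indTuple, hj, hjk, le_of_mem_SUp hσ hjk, a]
    · by_cases hjk : j ∈ SUp σ k <;> simp [indTuple, hj, hjk, hx0 (σ k), a]
  have hmax : (fun j => max (indicator (SUp σ (k + 1)) x j) (indTuple (SUp σ k) a j)) =
      indicator (SUp σ k) x := by
    ext j
    by_cases hj : j ∈ SUp σ (k + 1)
    · have hjk : j ∈ SUp σ k := SUp_eq_insert σ k ▸ mem_insert_of_mem hj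
      simp [indTuple, hj, hjk, le_of_mem_SUp hσ hjk, a]
    · by_cases hjk : j ∈ SUp σ k
      · obtain rfl : j = σ k := by simpa [SUp_eq_insert σ k, hj] using hjk
        simp [indTuple, hj, hjk, a, hx0]
      · simp [indTuple, hj, hjk]
  rw [hmin, hmax] at key
  linarith

theorem InvHMinDiffOn.indicator_SUp_sub (hinv : InvHMinDiffOn I f) (h0I : (0 : ℝ) ∈ I)
    (hIpos : I ⊆ Set.Ici 0) (hx : ∀ i, x i ∈ I) (hσ : Monotone (x ∘ σ)) (i : Fin n) :
    f (indicator (SUp σ i) x) - f (indTuple (SUp σ i) (x (σ i))) =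
      f (indicator (univ.filter fun j => x (σ i) < x j) x) -
        f (indTuple (univ.filter fun j => x (σ i) < x j) (x (σ i))) := by
  set a := x (σ i)
  have ha0 : 0 ≤ a := hIpos (hx _)
  have key := hinv (indicator (SUp σ i) x) (indicator_mem h0I hx _) a (hx _)
  have hmin : (fun j => min (indicator (SUp σ i) x j) a) = indTuple (SUp σ i) a := by
    ext j
    by_cases hj : j ∈ SUp σ i
    · simp [indTuple, hj, le_of_mem_SUp hσ hj, a]
    · simp [indTuple, hj, ha0]
  -- `[x]_a` keeps exactly the entries above `a`, and these all lie in `S↑_σ(i)`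
  have hcut : (fun j => if indicator (SUp σ i) x j ≤ a then 0 else indicator (SUp σ i) x j) =
      indicator (univ.filter fun j => a < x j) x := by
    ext j
    by_cases hj : j ∈ SUp σ i
    · by_cases hja : a < x j <;> simp [hj, hja, not_le.2]
    · have hja : ¬ a < x j := fun h => hj (mem_SUp_of_lt hσ h)
      simp [hj, hja, ha0]
  have hcutmin :
      (fun j => min (if indicator (SUp σ i) x j ≤ a then 0 else indicator (SUp σ i) x j) a) =
        indTuple (univ.filter fun j => a < x j) a := by
    ext j
    rw [congrFun hcut j]
    by_cases hja : a < x j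
    · simp [indTuple, hja, hja.le]
    · simp [indTuple, hja, ha0]
  rw [hmin, hcutmin, hcut] at key
  exact key

theorem InvHMinDiffOn.indicator_SUp_sub_succ (hinv : InvHMinDiffOn I f) (h0I : (0 : ℝ) ∈ I)
    (hIpos : I ⊆ Set.Ici 0) (hx : ∀ i, x i ∈ I) (hσ : Monotone (x ∘ σ)) (k : Fin n) :
    f (indicator (SUp σ k) x) - f (indicator (SUp σ (k + 1)) x) =
      f (indTuple (SUp σ k) (x (σ k))) - f (indTuple (SUp σ (k + 1)) (x (σ k))) := by
  have hk := hinv.indicator_SUp_sub h0I hIpos hx hσ k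
  by_cases hup : ∀ j ∈ SUp σ (k + 1), x (σ k) < x j
  · have hU : univ.filter (fun j => x (σ k) < x j) = SUp σ (k + 1) := by
      ext j
      refine ⟨fun hj => ?_, fun hj => by simpa using hup j hj⟩
      have hjk := mem_SUp_of_lt hσ (mem_filter.1 hj).2
      rw [SUp_eq_insert σ k, mem_insert] at hjk
      exact hjk.resolve_left fun h => by simp [h] at hj
    rw [hU] at hk
    linarith
  · -- otherwise the next sorted value ties with `x (σ k)`, and both steps cut at the same level
    obtain ⟨j, hj, hjk⟩ : ∃ j ∈ SUp σ (k + 1), x j ≤ x (σ k) := by simpa using hup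
    have hk1 : (k : ℕ) + 1 < n := by
      by_contra h
      simp [SUp_of_le σ (not_lt.1 h)] at hj
    have htie : x (σ ⟨k + 1, hk1⟩) = x (σ k) :=
      le_antisymm ((le_of_mem_SUp (i := ⟨k + 1, hk1⟩) hσ hj).trans hjk)
        (hσ (Fin.le_def.2 (Nat.le_succ _)))
    have hk' := hinv.indicator_SUp_sub h0I hIpos hx hσ ⟨k + 1, hk1⟩
    simp only [htie] at hk'
    linarith

theorem eq_choquetSum_of_indicator_SUp_sub_succ {φ : ℝ → ℝ} {v : Finset (Fin n) → ℝ}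
    (hf0 : f (fun _ => 0) = 0) (hind : ∀ a ∈ I, ∀ T, f (indTuple T a) = φ a * v T)
    (hx : ∀ i, x i ∈ I)
    (hstep : ∀ k : Fin n, f (indicator (SUp σ k) x) - f (indicator (SUp σ (k + 1)) x) =
      f (indTuple (SUp σ k) (x (σ k))) - f (indTuple (SUp σ (k + 1)) (x (σ k)))) :
    f x = choquetSum v σ (fun i => φ (x i)) := by
  calc f x = ∑ k : Fin n, (f (indicator (SUp σ k) x) - f (indicator (SUp σ (k + 1)) x)) := by
        rw [Fin.sum_sub_succ (fun k => f (indicator (SUp σ k) x)), SUp_zero, SUp_of_le σ le_rfl]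
        simp [hf0]
    _ = choquetSum v σ (fun i => φ (x i)) := by
        simp only [choquetSum, hstep, hind _ (hx _), mul_sub]

theorem eq_Cv_comp_of_comonModularOn_or_invHMinDiffOn {φ : ℝ → ℝ} {v : Finset (Fin n) → ℝ}
    (h : ComonModularOn I f ∨ InvHMinDiffOn I f) (h0I : (0 : ℝ) ∈ I) (hIpos : I ⊆ Set.Ici 0)
    (hf0 : f (fun _ => 0) = 0) (hφ : MonotoneOn φ I)
    (hind : ∀ a ∈ I, ∀ T, f (indTuple T a) = φ a * v T) (hx : ∀ i, x i ∈ I) :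
    f x = Cv v (fun i => φ (x i)) := by
  have hσ := Tuple.monotone_sort x
  rw [Cv_comp_eq_choquetSum v hφ hx hσ]
  refine eq_choquetSum_of_indicator_SUp_sub_succ hf0 hind hx fun k => ?_
  rcases h with hmod | hinv
  · exact hmod.indicator_SUp_sub_succ h0I hIpos hx hσ k
  · exact hinv.indicator_SUp_sub_succ h0I hIpos hx hσ k

end Peeling

theorem statement15_general (n : ℕ) (I : Set ℝ)
    (hIcc : Set.Icc (0 : ℝ) 1 ⊆ I) (hIpos : I ⊆ Set.Ici 0)
    (f : (Fin n → ℝ) → ℝ)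
    (hnc : ∃ x y : Fin n → ℝ, (∀ i, x i ∈ I) ∧ (∀ i, y i ∈ I) ∧ f x ≠ f y)
    (hf0 : f (fun _ => 0) = 0) :
    ((∃ v : Finset (Fin n) → ℝ, ∃ φ : ℝ → ℝ, v ∅ = 0 ∧
        (∀ y ∈ I, ∀ z ∈ I, y ≤ z → φ y ≤ φ z) ∧ φ 0 = 0 ∧
        ∀ x : Fin n → ℝ, (∀ i, x i ∈ I) → f x = Cv v (fun i => φ (x i))) ∧
      ∃ S : Finset (Fin n), f (indTuple S 1) ≠ 0)
    ↔
    ((ComonModularOn I f ∨ InvHMinDiffOn I f) ∧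
      ∃ φ : ℝ → ℝ, (∀ y ∈ I, ∀ z ∈ I, y ≤ z → φ y ≤ φ z) ∧ φ 0 = 0 ∧
        ∀ x ∈ I, ∀ S : Finset (Fin n),
          f (indTuple S x) = Real.sign x * φ x * f (indTuple S (Real.sign x))) := by
  have h0I : (0 : ℝ) ∈ I := hIcc ⟨le_rfl, zero_le_one⟩
  have h1I : (1 : ℝ) ∈ I := hIcc ⟨zero_le_one, le_rfl⟩
  constructor
  · rintro ⟨⟨v, φ, hv0, (hφ : MonotoneOn φ I), hφ0, hrep⟩, S, hS⟩
    have hind (a : ℝ) (ha : a ∈ I) := apply_indTuple_of_eq_Cv hv0 hφ hφ0 h0I hIpos hrep ha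
    have hφ1 : 0 < φ 1 := by
      refine (hφ0 ▸ hφ h0I h1I zero_le_one : 0 ≤ φ 1).lt_of_ne' fun h => hS ?_
      rw [hind 1 h1I, h, zero_mul]
    have hψ0 : φ 0 / φ 1 = 0 := by simp [hφ0]
    refine ⟨Or.inl (comonModularOn_of_eq_Cv hφ hrep), fun t => φ t / φ 1,
      fun y hy z hz hyz => div_le_div_of_nonneg_right (hφ hy hz hyz) hφ1.le, hψ0,
      fun a ha T => ?_⟩
    rw [apply_indTuple_sign_iff (φ := fun t => φ t / φ 1) hf0 hψ0 (hIpos ha), hind a ha,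
      hind 1 h1I]
    field_simp
  · rintro ⟨hmod, φ, (hφ : MonotoneOn φ I), hφ0, hsc⟩
    set v : Finset (Fin n) → ℝ := fun T => f (indTuple T 1)
    have hind (a : ℝ) (ha : a ∈ I) (T : Finset (Fin n)) : f (indTuple T a) = φ a * v T :=
      (apply_indTuple_sign_iff hf0 hφ0 (hIpos ha) T).1 (hsc a ha T)
    have hrep (x : Fin n → ℝ) (hx : ∀ i, x i ∈ I) : f x = Cv v (fun i => φ (x i)) :=
      eq_Cv_comp_of_comonModularOn_or_invHMinDiffOn hmod h0I hIpos hf0 hφ hind hx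
    have hv0 : v ∅ = 0 := by simpa only [v, indTuple_empty] using hf0
    refine ⟨⟨v, φ, hv0, hφ, hφ0, hrep⟩, ?_⟩
    by_contra! hv
    obtain ⟨x, y, hx, hy, hxy⟩ := hnc
    exact hxy (by simp [hrep x hx, hrep y hy, Cv, v, hv])

theorem statement15 (n : ℕ) (hn : 0 < n) (I : Set ℝ) (hI : I.OrdConnected)
    (hIcc : Set.Icc (0 : ℝ) 1 ⊆ I) (hIpos : I ⊆ Set.Ici 0)
    (f : (Fin n → ℝ) → ℝ)
    (hnc : ∃ x y : Fin n → ℝ, (∀ i, x i ∈ I) ∧ (∀ i, y i ∈ I) ∧ f x ≠ f y)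
    (hf0 : f (fun _ => 0) = 0) :
    ((∃ v : Finset (Fin n) → ℝ, ∃ φ : ℝ → ℝ, v ∅ = 0 ∧
        (∀ y ∈ I, ∀ z ∈ I, y ≤ z → φ y ≤ φ z) ∧ φ 0 = 0 ∧
        ∀ x : Fin n → ℝ, (∀ i, x i ∈ I) → f x = Cv v (fun i => φ (x i))) ∧
      ∃ S : Finset (Fin n), f (indTuple S 1) ≠ 0)
    ↔
    ((ComonModularOn I f ∨ InvHMinDiffOn I f) ∧
      ∃ φ : ℝ → ℝ, (∀ y ∈ I, ∀ z ∈ I, y ≤ z → φ y ≤ φ z) ∧ φ 0 = 0 ∧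
        ∀ x ∈ I, ∀ S : Finset (Fin n),
          f (indTuple S x) = Real.sign x * φ x * f (indTuple S (Real.sign x))) :=
  statement15_general n I hIcc hIpos f hnc hf0
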